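/- Let G be a locally finite graph and U : E → ℝ injective. Then for every edge e, Z_w(e) = sup over all finite sets W ⊆ V with e ∈ ∂_E W of min{U(e') : e' ∈ ∂_E W \ {e}}, where Z_w(e) := inf over extended paths P in G \ {e} joining the endpoints of e of sup{U(e') : e' ∈ P} (with Z_w(e) := +∞ if no such extended path exists, and with the min over an empty set equal to +∞). Moreover, the infimum in the definition of Z_w(e) is attained. -/

import Mathlib

open SimpleGraph

/-- The set of edges of `G` whose endpoints cannot be joined by a path all of whose
edges have strictly smaller label: the (free) minimal spanning forest / tree of `G`. -/
def mstEdges {V α : Type*} [LinearOrder α] (G : SimpleGraph V) (U : Sym2 V → α) :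
    Set (Sym2 V) :=
  {e | e ∈ G.edgeSet ∧ ∀ a b : V, e = s(a, b) →
    ∀ p : G.Walk a b, p.IsPath → ∃ f ∈ p.edges, U e ≤ U f}

/-- A one-sided infinite simple path in `G`. -/
def IsRay {V : Type*} (G : SimpleGraph V) (r : ℕ → V) : Prop :=
  Function.Injective r ∧ ∀ n : ℕ, G.Adj (r n) (r (n + 1))

/-- The edges of a one-sided infinite path. -/
def rayEdges {V : Type*} (r : ℕ → V) : Set (Sym2 V) :=
  Set.range fun n : ℕ => s(r n, r (n + 1))

/-- The wired minimal spanning forest of `G`: edges such that every extended path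
(finite simple path, or pair of disjoint rays from the two endpoints) joining the
endpoints contains an edge of label at least as large. -/
def wmsfEdges {V : Type*} (G : SimpleGraph V) (U : Sym2 V → ℝ) : Set (Sym2 V) :=
  {e | e ∈ G.edgeSet ∧ ∀ a b : V, e = s(a, b) →
    (∀ p : G.Walk a b, p.IsPath → ∃ f ∈ p.edges, U e ≤ U f) ∧
    (∀ r₁ r₂ : ℕ → V, IsRay G r₁ → IsRay G r₂ → r₁ 0 = a → r₂ 0 = b →
      (∀ m n : ℕ, r₁ m ≠ r₂ n) →
      ∃ f ∈ rayEdges r₁ ∪ rayEdges r₂, U e ≤ U f)}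

/-- The edges of `G` joining `W` to its complement. -/
def cutEdges {V : Type*} (G : SimpleGraph V) (W : Set V) : Set (Sym2 V) :=
  {e | e ∈ G.edgeSet ∧ ∃ a b : V, e = s(a, b) ∧ a ∈ W ∧ b ∉ W}

/-- A bi-infinite simple path in `G`. -/
def IsBiRay {V : Type*} (G : SimpleGraph V) (r : ℤ → V) : Prop :=
  Function.Injective r ∧ ∀ n : ℤ, G.Adj (r n) (r (n + 1))

/-- The edges of a bi-infinite simple path. -/
def biRayEdges {V : Type*} (r : ℤ → V) : Set (Sym2 V) :=
  Set.range fun n : ℤ => s(r n, r (n + 1))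

/-- The maximum label along a list of edges, as an extended real. -/
noncomputable def listMaxE {V : Type*} (U : Sym2 V → ℝ) (L : List (Sym2 V)) : EReal :=
  sSup {y : EReal | ∃ f ∈ L, y = (U f : EReal)}

/-- The set of values `sup {U(e') : e' ∈ P}` over extended paths `P` in `G \ {e}`
joining the endpoints of `e`: an extended path is either a finite simple path
between the endpoints, or a pair of vertex-disjoint rays started at the two
endpoints. -/
noncomputable def ZwSetE {V : Type*} (G : SimpleGraph V) (U : Sym2 V → ℝ) (e : Sym2 V) :
    Set EReal :=
  {x : EReal |
    (∃ (a b : V) (p : G.Walk a b), e = s(a, b) ∧ p.IsPath ∧ e ∉ p.edges ∧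
      x = listMaxE U p.edges) ∨
    (∃ (a b : V) (r₁ r₂ : ℕ → V), e = s(a, b) ∧ IsRay G r₁ ∧ IsRay G r₂ ∧
      r₁ 0 = a ∧ r₂ 0 = b ∧ (∀ m n : ℕ, r₁ m ≠ r₂ n) ∧
      e ∉ rayEdges r₁ ∪ rayEdges r₂ ∧
      x = sSup {y : EReal | ∃ f ∈ rayEdges r₁ ∪ rayEdges r₂, y = (U f : EReal)})}

/-- `inf {U(e') : e' ∈ ∂_E W \ {e}}`, as an extended real (`+∞` if empty). -/
noncomputable def cutInfE {V : Type*} (G : SimpleGraph V) (U : Sym2 V → ℝ)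
    (W : Set V) (e : Sym2 V) : EReal :=
  sInf {y : EReal | ∃ f ∈ cutEdges G W \ {e}, y = (U f : EReal)}

section Aux

variable {V : Type*}

lemma walk_cross (G : SimpleGraph V) {W : Set V} : ∀ {u v : V} (p : G.Walk u v),
    u ∈ W → v ∉ W → ∃ f ∈ p.edges, f ∈ cutEdges G W := by
  intro u v p
  induction p with
  | nil => intro hu hv; exact absurd hu hv
  | @cons u u' v h q ih =>
    intro hu hv
    by_cases hm : u' ∈ W
    · obtain ⟨f, hf, hc⟩ := ih hm hv
      exact ⟨f, List.mem_cons_of_mem _ hf, hc⟩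
    · exact ⟨s(u, u'), List.mem_cons_self,
        ⟨(G.mem_edgeSet).mpr h, u, u', rfl, hu, hm⟩⟩

lemma ray_cross {G : SimpleGraph V} {r : ℕ → V} (hr : IsRay G r) {W : Set V}
    (hW : W.Finite) (h0 : r 0 ∈ W) : ∃ n, r n ∈ W ∧ r (n + 1) ∉ W := by
  have hex : ∃ m, r m ∉ W := by
    by_contra h
    push_neg at h
    exact (Set.infinite_range_of_injective hr.1) (hW.subset (Set.range_subset_iff.mpr h))
  classical
  let m := Nat.find hex
  have hm : r m ∉ W := Nat.find_spec hex
  have hm0 : m ≠ 0 := fun h => hm (h ▸ h0)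
  refine ⟨m - 1, ?_, ?_⟩
  · by_contra h
    exact absurd (Nat.find_min' hex h) (by omega)
  · have : m - 1 + 1 = m := by omega
    rwa [this]

lemma cutEdges_finite (G : SimpleGraph V) (hlf : ∀ v : V, (G.neighborSet v).Finite)
    {W : Set V} (hW : W.Finite) : (cutEdges G W).Finite := by
  have : cutEdges G W ⊆ ⋃ x ∈ W, (fun y => s(x, y)) '' (G.neighborSet x) := by
    rintro f ⟨hf, x, y, rfl, hx, hy⟩
    exact Set.mem_biUnion hx ⟨y, (G.mem_edgeSet).mp hf, rfl⟩
  exact Set.Finite.subset (hW.biUnion fun x _ => (hlf x).image _) this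

/-- The easy direction: every cut value is below every extended-path value. -/
lemma cut_le_path (G : SimpleGraph V) (hlf : ∀ v : V, (G.neighborSet v).Finite)
    (U : Sym2 V → ℝ) (e : Sym2 V) {W : Set V} (hW : W.Finite)
    (heW : e ∈ cutEdges G W) : ∀ x ∈ ZwSetE G U e, cutInfE G U W e ≤ x := by
  obtain ⟨heS, a', b', he', ha', hb'⟩ := heW
  rintro x (⟨a, b, p, hab, hp, hep, rfl⟩ | ⟨a, b, r₁, r₂, hab, h1, h2, h10, h20, hdisj, hem, rfl⟩)
  · -- path case
    have hcross : ∃ f ∈ p.edges, f ∈ cutEdges G W := by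
      rcases (Sym2.eq_iff.mp (hab.symm.trans he')) with ⟨h1, h2⟩ | ⟨h1, h2⟩
      · exact walk_cross G p (h1 ▸ ha') (h2 ▸ hb')
      · obtain ⟨f, hf, hc⟩ := walk_cross G p.reverse (h2 ▸ ha') (h1 ▸ hb')
        rw [SimpleGraph.Walk.edges_reverse, List.mem_reverse] at hf
        exact ⟨f, hf, hc⟩
    obtain ⟨f, hfp, hfc⟩ := hcross
    have hfe : f ≠ e := fun h => hep (h ▸ hfp)
    exact le_trans (sInf_le ⟨f, ⟨hfc, hfe⟩, rfl⟩) (le_sSup ⟨f, hfp, rfl⟩)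
  · -- ray case
    have hcross : ∃ f ∈ rayEdges r₁ ∪ rayEdges r₂, f ∈ cutEdges G W := by
      rcases (Sym2.eq_iff.mp (hab.symm.trans he')) with ⟨hy1, hy2⟩ | ⟨hy1, hy2⟩
      · obtain ⟨n, hn, hn1⟩ := ray_cross h1 hW (by rw [h10, hy1]; exact ha')
        exact ⟨s(r₁ n, r₁ (n + 1)), Or.inl ⟨n, rfl⟩,
          ⟨(G.mem_edgeSet).mpr (h1.2 n), _, _, rfl, hn, hn1⟩⟩
      · obtain ⟨n, hn, hn1⟩ := ray_cross h2 hW (by rw [h20, hy2]; exact ha')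
        exact ⟨s(r₂ n, r₂ (n + 1)), Or.inr ⟨n, rfl⟩,
          ⟨(G.mem_edgeSet).mpr (h2.2 n), _, _, rfl, hn, hn1⟩⟩
    obtain ⟨f, hfp, hfc⟩ := hcross
    have hfe : f ≠ e := fun h => hem (h ▸ hfp)
    exact le_trans (sInf_le ⟨f, ⟨hfc, hfe⟩, rfl⟩) (le_sSup ⟨f, hfp, rfl⟩)



/-- `H` with all vertices of `S` deleted. -/
def Avoid (H : SimpleGraph V) (S : Set V) : SimpleGraph V where
  Adj x y := H.Adj x y ∧ x ∉ S ∧ y ∉ S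
  symm := ⟨fun x y ⟨h1, h2, h3⟩ => ⟨h1.symm, h3, h2⟩⟩
  loopless := ⟨fun x h => H.loopless.irrefl x h.1⟩

lemma avoid_empty (H : SimpleGraph V) : Avoid H ∅ = H := by
  ext x y
  simp [Avoid]

def RayInv (H : SimpleGraph V) (v : V) (S : Set V) : Prop :=
  v ∉ S ∧ {w | (Avoid H S).Reachable v w}.Infinite

lemma walk_avoid {H : SimpleGraph V} {S : Set V} {z : V} : ∀ {u w : V}
    (p : (Avoid H S).Walk u w), z ∉ p.support → (Avoid H (insert z S)).Reachable u w := by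
  intro u w p
  induction p with
  | nil => intro _; exact Reachable.refl _
  | @cons u u' w h q ih =>
    intro hz
    rw [SimpleGraph.Walk.support_cons] at hz
    have hu : u ≠ z := fun h' => hz (h' ▸ List.mem_cons_self)
    have hu' : u' ≠ z := fun h' => hz (List.mem_cons_of_mem _ (h' ▸ q.start_mem_support))
    have hz' : z ∉ q.support := fun h' => hz (List.mem_cons_of_mem _ h')
    exact Reachable.trans
      (SimpleGraph.Adj.reachable ⟨h.1, by simp [h.2.1, hu], by simp [h.2.2, hu']⟩)
      (ih hz')

lemma ray_step (H : SimpleGraph V) (hlf : ∀ v : V, (H.neighborSet v).Finite)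
    {v : V} {S : Set V} (h : RayInv H v S) :
    ∃ u, (Avoid H S).Adj v u ∧ RayInv H u (insert v S) := by
  classical
  obtain ⟨hvS, hinf⟩ := h
  have hsub : {w | (Avoid H S).Reachable v w} \ {v} ⊆
      ⋃ u ∈ (Avoid H S).neighborSet v, {w | (Avoid H (insert v S)).Reachable u w} := by
    rintro w ⟨hw, hwv⟩
    obtain ⟨p0⟩ := hw
    have hp : p0.bypass.IsPath := SimpleGraph.Walk.bypass_isPath p0
    set p := p0.bypass with hpdef
    cases hq : p with
    | nil => exact absurd rfl hwv
    | @cons _ u _ hadj q =>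
      have hqpath : (SimpleGraph.Walk.cons hadj q).IsPath := hq ▸ hp
      have hvq : v ∉ q.support := (SimpleGraph.Walk.cons_isPath_iff hadj q).mp hqpath |>.2
      exact Set.mem_biUnion hadj (walk_avoid q hvq)
  have hinf' : ({w | (Avoid H S).Reachable v w} \ {v}).Infinite := hinf.diff (Set.finite_singleton v)
  have hfin : ((Avoid H S).neighborSet v).Finite :=
    (hlf v).subset (fun u hu => hu.1)
  have : ∃ u ∈ (Avoid H S).neighborSet v, {w | (Avoid H (insert v S)).Reachable u w}.Infinite := by
    by_contra hcon
    push_neg at hcon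
    exact (hinf'.mono hsub) (hfin.biUnion hcon)
  obtain ⟨u, hu, hinfu⟩ := this
  refine ⟨u, hu, ?_, hinfu⟩
  simp only [Set.mem_insert_iff, not_or]
  exact ⟨fun h' => (Avoid H S).loopless.irrefl v (h' ▸ hu), hu.2.2⟩

noncomputable def raySeq (H : SimpleGraph V) (hlf : ∀ v : V, (H.neighborSet v).Finite)
    (a : V) (h0 : RayInv H a ∅) : ℕ → {p : V × Set V // RayInv H p.1 p.2}
  | 0 => ⟨(a, ∅), h0⟩
  | n + 1 =>
    let p := raySeq H hlf a h0 n
    ⟨((ray_step H hlf p.2).choose, insert p.1.1 p.1.2), (ray_step H hlf p.2).choose_spec.2⟩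

lemma raySeq_adj (H : SimpleGraph V) (hlf : ∀ v : V, (H.neighborSet v).Finite)
    (a : V) (h0 : RayInv H a ∅) (n : ℕ) :
    (Avoid H ((raySeq H hlf a h0 n).1.2)).Adj ((raySeq H hlf a h0 n).1.1)
      ((raySeq H hlf a h0 (n + 1)).1.1) :=
  (ray_step H hlf (raySeq H hlf a h0 n).2).choose_spec.1

lemma raySeq_snd (H : SimpleGraph V) (hlf : ∀ v : V, (H.neighborSet v).Finite)
    (a : V) (h0 : RayInv H a ∅) (n : ℕ) :
    (raySeq H hlf a h0 (n + 1)).1.2 = insert ((raySeq H hlf a h0 n).1.1) ((raySeq H hlf a h0 n).1.2) := rfl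

lemma raySeq_mem (H : SimpleGraph V) (hlf : ∀ v : V, (H.neighborSet v).Finite)
    (a : V) (h0 : RayInv H a ∅) : ∀ n m : ℕ, m < n →
    (raySeq H hlf a h0 m).1.1 ∈ (raySeq H hlf a h0 n).1.2 := by
  intro n
  induction n with
  | zero => intro m hm; omega
  | succ n ih =>
    intro m hm
    rw [raySeq_snd]
    rcases Nat.lt_succ_iff_lt_or_eq.mp hm with h | h
    · exact Set.mem_insert_iff.mpr (Or.inr (ih m h))
    · exact h ▸ Set.mem_insert _ _

lemma exists_ray (H : SimpleGraph V) (hlf : ∀ v : V, (H.neighborSet v).Finite)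
    (a : V) (hinf : {w | H.Reachable a w}.Infinite) :
    ∃ r : ℕ → V, IsRay H r ∧ r 0 = a ∧ ∀ n, H.Reachable a (r n) := by
  have h0 : RayInv H a ∅ := by
    refine ⟨Set.notMem_empty a, ?_⟩
    rwa [avoid_empty]
  set r : ℕ → V := fun n => (raySeq H hlf a h0 n).1.1 with hr
  have hadj : ∀ n, H.Adj (r n) (r (n + 1)) := fun n => (raySeq_adj H hlf a h0 n).1
  have hnot : ∀ n, r n ∉ (raySeq H hlf a h0 n).1.2 := fun n => (raySeq H hlf a h0 n).2.1
  have hinj : Function.Injective r := by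
    intro m n hmn
    by_contra hne
    rcases Nat.lt_or_ge m n with h | h
    · exact hnot n (hmn ▸ raySeq_mem H hlf a h0 n m h)
    · exact hnot m (hmn ▸ raySeq_mem H hlf a h0 m n (by omega))
  have hreach : ∀ n, H.Reachable a (r n) := by
    intro n
    induction n with
    | zero => exact Reachable.refl _
    | succ n ih => exact ih.trans (hadj n).reachable
  exact ⟨r, ⟨hinj, hadj⟩, rfl, hreach⟩


/-- The graph of edges of `G` other than `e` with label at most `s`. -/
def Hc (G : SimpleGraph V) (U : Sym2 V → ℝ) (e : Sym2 V) (s : EReal) : SimpleGraph V where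
  Adj x y := G.Adj x y ∧ s(x, y) ≠ e ∧ (U s(x, y) : EReal) ≤ s
  symm := by
    refine ⟨?_⟩
    intro x y ⟨h1, h2, h3⟩
    refine ⟨h1.symm, ?_, ?_⟩
    · rwa [Sym2.eq_swap]
    · rwa [Sym2.eq_swap]
  loopless := ⟨fun x h => G.loopless.irrefl x h.1⟩

lemma Hc_le (G : SimpleGraph V) (U : Sym2 V → ℝ) (e : Sym2 V) (s : EReal) :
    Hc G U e s ≤ G := fun _ _ h => h.1

lemma Hc_edge {G : SimpleGraph V} {U : Sym2 V → ℝ} {e : Sym2 V} {s : EReal} {f : Sym2 V}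
    (hf : f ∈ (Hc G U e s).edgeSet) : f ≠ e ∧ (U f : EReal) ≤ s := by
  induction f using Sym2.ind with
  | _ x y => exact ⟨((Hc G U e s).mem_edgeSet.mp hf).2.1, ((Hc G U e s).mem_edgeSet.mp hf).2.2⟩

lemma comp_cut (G : SimpleGraph V) (hlf : ∀ v : V, (G.neighborSet v).Finite)
    (U : Sym2 V → ℝ) {e : Sym2 V} {c d : V} (he : e ∈ G.edgeSet) (hcd : e = s(c, d))
    (s : EReal) (hs : ∀ W : Set V, W.Finite → e ∈ cutEdges G W → cutInfE G U W e ≤ s)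
    (hnr : ¬ (Hc G U e s).Reachable c d)
    (hfin : {w | (Hc G U e s).Reachable c w}.Finite) :
    e ∈ cutEdges G {w | (Hc G U e s).Reachable c w} ∧
      cutInfE G U {w | (Hc G U e s).Reachable c w} e = ⊤ := by
  classical
  set H := Hc G U e s with hH
  set W := {w | H.Reachable c w} with hWdef
  have heW : e ∈ cutEdges G W := ⟨he, c, d, hcd, Reachable.refl c, hnr⟩
  refine ⟨heW, ?_⟩
  have hbig : ∀ f ∈ cutEdges G W \ {e}, s < (U f : EReal) := by
    rintro f ⟨⟨hfS, x, y, rfl, hx, hy⟩, hfe⟩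
    by_contra hle
    push_neg at hle
    have hadj : H.Adj x y := ⟨(G.mem_edgeSet).mp hfS, hfe, hle⟩
    exact hy (hx.trans hadj.reachable)
  by_cases hne : ({y : EReal | ∃ f ∈ cutEdges G W \ {e}, y = (U f : EReal)}).Nonempty
  · exfalso
    have hfin2 : ({y : EReal | ∃ f ∈ cutEdges G W \ {e}, y = (U f : EReal)}).Finite := by
      refine Set.Finite.subset (((cutEdges_finite G hlf hfin).image
        (fun f => ((U f : ℝ) : EReal)))) ?_
      rintro y ⟨f, hf, rfl⟩
      exact ⟨f, hf.1, rfl⟩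
    obtain ⟨f, hf, heq⟩ := hne.csInf_mem hfin2
    have h1 : cutInfE G U W e ≤ s := hs W hfin heW
    rw [cutInfE, heq] at h1
    exact absurd h1 (not_le.mpr (hbig f hf))
  · rw [Set.not_nonempty_iff_eq_empty] at hne
    rw [cutInfE, hne, sInf_empty]

lemma walk_to_Hc {G : SimpleGraph V} {U : Sym2 V → ℝ} {e : Sym2 V} {s : EReal} :
    ∀ {u v : V} (p : G.Walk u v), (∀ f ∈ p.edges, f ≠ e ∧ (U f : EReal) ≤ s) →
      (Hc G U e s).Reachable u v := by
  intro u v p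
  induction p with
  | nil => intro _; exact Reachable.refl _
  | @cons u u' v h q ih =>
    intro hcond
    have h1 := hcond s(u, u') (List.mem_cons_self)
    exact Reachable.trans (SimpleGraph.Adj.reachable ⟨h, h1.1, h1.2⟩)
      (ih fun f hf => hcond f (List.mem_cons_of_mem _ hf))

lemma dich (G : SimpleGraph V) (hlf : ∀ v : V, (G.neighborSet v).Finite)
    (U : Sym2 V → ℝ) {e : Sym2 V} {a b : V} (he : e ∈ G.edgeSet) (hab : e = s(a, b))
    (s : EReal) (hs : ∀ W : Set V, W.Finite → e ∈ cutEdges G W → cutInfE G U W e ≤ s) :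
    (∃ x ∈ ZwSetE G U e, x ≤ s) ∨
      ∃ W : Set V, W.Finite ∧ e ∈ cutEdges G W ∧ cutInfE G U W e = ⊤ := by
  classical
  set H := Hc G U e s with hH
  have hHlf : ∀ v : V, (H.neighborSet v).Finite := fun v => (hlf v).subset (fun u hu => hu.1)
  by_cases hr : H.Reachable a b
  · left
    obtain ⟨p0⟩ := hr
    set p := p0.bypass with hpdef
    have hp : p.IsPath := SimpleGraph.Walk.bypass_isPath p0
    have hsub : ∀ f ∈ p.edges, f ∈ G.edgeSet := fun f hf =>
      SimpleGraph.edgeSet_mono (Hc_le G U e s) (p.edges_subset_edgeSet hf)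
    refine ⟨listMaxE U (p.transfer G hsub).edges,
      Or.inl ⟨a, b, p.transfer G hsub, hab, SimpleGraph.Walk.IsPath.transfer _ hp, ?_, rfl⟩, ?_⟩
    · rw [SimpleGraph.Walk.edges_transfer]
      intro hmem
      exact (Hc_edge (p.edges_subset_edgeSet hmem)).1 rfl
    · rw [listMaxE, SimpleGraph.Walk.edges_transfer]
      refine sSup_le ?_
      rintro y ⟨f, hf, rfl⟩
      exact (Hc_edge (p.edges_subset_edgeSet hf)).2
  · by_cases hA : {w | H.Reachable a w}.Finite
    · right
      obtain ⟨h1, h2⟩ := comp_cut G hlf U he hab s hs hr hA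
      exact ⟨_, hA, h1, h2⟩
    by_cases hB : {w | H.Reachable b w}.Finite
    · right
      obtain ⟨h1, h2⟩ := comp_cut G hlf U he (hab.trans Sym2.eq_swap) s hs
        (fun h => hr h.symm) hB
      exact ⟨_, hB, h1, h2⟩
    -- both components infinite: build two disjoint rays
    left
    obtain ⟨r₁, hr₁, h10, hre1⟩ := exists_ray H hHlf a hA
    obtain ⟨r₂, hr₂, h20, hre2⟩ := exists_ray H hHlf b hB
    have hdisj : ∀ m n : ℕ, r₁ m ≠ r₂ n := fun m n h =>
      hr ((hre1 m).trans (h ▸ (hre2 n).symm))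
    have hnotin : e ∉ rayEdges r₁ ∪ rayEdges r₂ := by
      rintro (⟨n, hn⟩ | ⟨n, hn⟩)
      · exact (hr₁.2 n).2.1 hn
      · exact (hr₂.2 n).2.1 hn
    refine ⟨_, Or.inr ⟨a, b, r₁, r₂, hab, ⟨hr₁.1, fun n => (hr₁.2 n).1⟩,
      ⟨hr₂.1, fun n => (hr₂.2 n).1⟩, h10, h20, hdisj, hnotin, rfl⟩, ?_⟩
    refine sSup_le ?_
    rintro y ⟨f, hf | hf, rfl⟩
    · obtain ⟨n, rfl⟩ := hf
      exact (hr₁.2 n).2.2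
    · obtain ⟨n, rfl⟩ := hf
      exact (hr₂.2 n).2.2

end Aux

/-- `Z_w(e) := inf ZwSetE` (`+∞` if there is no extended path) equals
the supremum over all cuts `∂_E W` with `W` finite and `e ∈ ∂_E W` of the minimum
label on `∂_E W \ {e}`; moreover the infimum defining `Z_w(e)` is attained. -/
theorem stmt7 {V : Type*} (G : SimpleGraph V)
    (hlf : ∀ v : V, (G.neighborSet v).Finite)
    (U : Sym2 V → ℝ) (hU : Set.InjOn U G.edgeSet)
    (e : Sym2 V) (he : e ∈ G.edgeSet) :
    sInf (ZwSetE G U e) =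
      sSup {x : EReal | ∃ W : Set V, W.Finite ∧ e ∈ cutEdges G W ∧ x = cutInfE G U W e} ∧
    ((ZwSetE G U e).Nonempty → sInf (ZwSetE G U e) ∈ ZwSetE G U e) := by
  classical
  obtain ⟨a, b, hab⟩ : ∃ a b : V, e = s(a, b) := Sym2.ind (fun a b => ⟨a, b, rfl⟩) e
  set S := {x : EReal | ∃ W : Set V, W.Finite ∧ e ∈ cutEdges G W ∧ x = cutInfE G U W e} with hS
  set s := sSup S with hsdef
  have hs : ∀ W : Set V, W.Finite → e ∈ cutEdges G W → cutInfE G U W e ≤ s :=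
    fun W h1 h2 => le_sSup ⟨W, h1, h2, rfl⟩
  have heasy : s ≤ sInf (ZwSetE G U e) := by
    refine sSup_le ?_
    rintro c ⟨W, h1, h2, rfl⟩
    exact le_sInf fun x hx => cut_le_path G hlf U e h1 h2 x hx
  rcases dich G hlf U he hab s hs with ⟨x, hx, hxs⟩ | ⟨W, hW, heW, htop⟩
  · have hxinf : x = sInf (ZwSetE G U e) :=
      le_antisymm (le_trans hxs heasy) (sInf_le hx)
    constructor
    · exact le_antisymm (le_trans (sInf_le hx) hxs) heasy
    · intro _
      exact hxinf ▸ hx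
  · have hT : (⊤ : EReal) ∈ S := ⟨W, hW, heW, htop.symm⟩
    have hsup : s = ⊤ := top_unique (le_sSup hT)
    have hinf : ∀ x ∈ ZwSetE G U e, x = ⊤ := fun x hx =>
      top_unique (htop ▸ cut_le_path G hlf U e hW heW x hx)
    have hinf' : sInf (ZwSetE G U e) = ⊤ :=
      top_unique (le_sInf fun x hx => (hinf x hx).ge)
    refine ⟨by rw [hinf']; exact hsup.symm, fun ⟨x, hx⟩ => ?_⟩
    rw [hinf']
    exact (hinf x hx) ▸ hx
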